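/- Let n ≥ 4 be an integer. Let W be the group of ℤ-linear automorphisms of ℤ^n given by signed permutations (ε, σ) with σ a permutation of {1,…,n} and ε ∈ {±1}^n satisfying ε₁ε₂⋯εₙ = 1 (the Weyl group of type D_n). Let M : ℤ^n → ℤ^n be the ℤ-linear map M(x₁, …, xₙ) = (−xₙ, x₁, …, x_{n−1}). Then the set {s ∈ W : s∘M = M∘s} has exactly n elements. -/

import Mathlib

/-!
A signed permutation `f` commuting with `M` is determined by `f e₀`, where `e_j` is the
standard basis: `e_j = M^j e₀` for `j < n`, so `f e_j = M^j (f e₀)`. As `f e₀ = ±e_d` while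
`M^d e₀ = e_d` and `M^(d+n) e₀ = -e_d`, every such `f` is one of the `2n` distinct maps
`M^m`, `m < 2n`. The signs of `M` multiply to `-1`, hence those of `M^m` to `(-1)^m`, and the
elements of `W` among them are exactly the `n` maps `M^(2k)`, `k < n`.
-/

/-- The signed cyclic shift `M(x₁, …, xₙ) = (−xₙ, x₁, …, x_{n−1})` on `ℤ^n`. -/
def signedShift (n : ℕ) [NeZero n] (x : Fin n → ℤ) : Fin n → ℤ :=
  fun i => if i = 0 then - x (i - 1) else x (i - 1)

/-- The action of a signed permutation `(ε, σ)` on `ℤ^n`: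
`x ↦ (ε_{σ⁻¹(1)} x_{σ⁻¹(1)}, …, ε_{σ⁻¹(n)} x_{σ⁻¹(n)})`. -/
def sgnPermAct (n : ℕ) (ε : Fin n → ℤ) (σ : Equiv.Perm (Fin n)) :
    (Fin n → ℤ) → (Fin n → ℤ) :=
  fun x i => ε (σ⁻¹ i) * x (σ⁻¹ i)

open Function

theorem Pi.single_eq_single_iff_of_ne_zero {ι M : Type*} [DecidableEq ι] [Zero M]
    {i j : ι} {a b : M} (ha : a ≠ 0) :
    (Pi.single i a : ι → M) = Pi.single j b ↔ i = j ∧ a = b := by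
  refine ⟨fun h => ?_, fun ⟨hij, hab⟩ => hij ▸ hab ▸ rfl⟩
  by_cases hij : i = j
  · subst hij
    exact ⟨rfl, by simpa using congrFun h i⟩
  · exact absurd (by simpa [hij] using congrFun h i) ha

def IsSignedPerm (n : ℕ) (c : ℤ) (f : (Fin n → ℤ) → Fin n → ℤ) : Prop :=
  ∃ (ε : Fin n → ℤ) (σ : Equiv.Perm (Fin n)),
    (∀ i, ε i = 1 ∨ ε i = -1) ∧ (∏ i, ε i) = c ∧ f = sgnPermAct n ε σ

section SignedPermutation

variable {n : ℕ}

lemma sgnPermAct_single (ε : Fin n → ℤ) (σ : Equiv.Perm (Fin n)) (j : Fin n) (a : ℤ) :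
    sgnPermAct n ε σ (Pi.single j a) = Pi.single (σ j) (ε j * a) := by
  funext i
  obtain ⟨k, rfl⟩ := σ.surjective i
  by_cases hkj : k = j
  · subst hkj; simp [sgnPermAct]
  · simp [sgnPermAct, hkj]

lemma sgnPermAct_comp (ε ε' : Fin n → ℤ) (σ σ' : Equiv.Perm (Fin n)) :
    sgnPermAct n ε σ ∘ sgnPermAct n ε' σ' =
      sgnPermAct n (fun j => ε (σ' j) * ε' j) (σ * σ') := by
  funext x i
  simp [sgnPermAct, mul_inv_rev, mul_assoc]

lemma eq_of_sgnPermAct_single_eq {ε ε' : Fin n → ℤ} {σ σ' : Equiv.Perm (Fin n)}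
    (hε : ∀ j, ε j ≠ 0)
    (h : ∀ j, sgnPermAct n ε σ (Pi.single j 1) = sgnPermAct n ε' σ' (Pi.single j 1)) :
    ε = ε' ∧ σ = σ' := by
  have key j := (Pi.single_eq_single_iff_of_ne_zero (hε j)).mp <| by
    simpa only [sgnPermAct_single, mul_one] using h j
  exact ⟨funext fun j => (key j).2, Equiv.ext fun j => (key j).1⟩

namespace IsSignedPerm

variable {c d : ℤ} {f g : (Fin n → ℤ) → Fin n → ℤ}

lemma comp (hf : IsSignedPerm n c f) (hg : IsSignedPerm n d g) :
    IsSignedPerm n (c * d) (f ∘ g) := by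
  obtain ⟨ε, σ, hε, rfl, rfl⟩ := hf
  obtain ⟨ε', σ', hε', rfl, rfl⟩ := hg
  refine ⟨_, _, fun j => ?_, ?_, sgnPermAct_comp ε ε' σ σ'⟩
  · exact Int.isUnit_iff.mp ((Int.isUnit_iff.mpr (hε _)).mul (Int.isUnit_iff.mpr (hε' j)))
  · rw [Finset.prod_mul_distrib, Equiv.prod_comp]

lemma eq_of_apply_single (hf : IsSignedPerm n c f) (hg : IsSignedPerm n d g)
    (h : ∀ j, f (Pi.single j 1) = g (Pi.single j 1)) : f = g := by
  obtain ⟨ε, σ, hε, -, rfl⟩ := hf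
  obtain ⟨ε', σ', -, -, rfl⟩ := hg
  obtain ⟨rfl, rfl⟩ :=
    eq_of_sgnPermAct_single_eq (fun j => (Int.isUnit_iff.mpr (hε j)).ne_zero) h
  rfl

lemma sign_eq (hc : IsSignedPerm n c f) (hd : IsSignedPerm n d f) : c = d := by
  obtain ⟨ε, σ, hε, rfl, rfl⟩ := hc
  obtain ⟨ε', σ', -, rfl, h⟩ := hd
  obtain ⟨rfl, -⟩ := eq_of_sgnPermAct_single_eq
    (fun j => (Int.isUnit_iff.mpr (hε j)).ne_zero) fun j => congrFun h _
  rfl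

end IsSignedPerm

end SignedPermutation

section SignedShift

variable {n : ℕ} [NeZero n]

lemma signedShift_eq_sgnPermAct :
    signedShift n = sgnPermAct n (fun j => if j = -1 then -1 else 1) (Equiv.addRight 1) := by
  funext x i
  by_cases hi : i = 0 <;> simp [signedShift, sgnPermAct, hi, sub_eq_add_neg]

lemma isSignedPerm_signedShift : IsSignedPerm n (-1) (signedShift n) :=
  ⟨_, _, fun j => by split_ifs <;> simp, by simp [Finset.prod_ite_eq'],
    signedShift_eq_sgnPermAct⟩

lemma isSignedPerm_iterate_signedShift (m : ℕ) :
    IsSignedPerm n ((-1) ^ m) (signedShift n)^[m] := by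
  induction m with
  | zero => exact ⟨1, 1, by simp, by simp, by funext x i; simp [sgnPermAct]⟩
  | succ m ih => simpa [iterate_succ, pow_succ] using ih.comp isSignedPerm_signedShift

lemma signedShift_single (i : Fin n) (a : ℤ) :
    signedShift n (Pi.single i a) = Pi.single (i + 1) (if i + 1 = 0 then -a else a) := by
  funext k
  by_cases hk : k = i + 1
  · subst hk
    simp only [signedShift, add_sub_cancel_right, Pi.single_eq_same]
  · have : k - 1 ≠ i := fun h => hk (by rw [← h, sub_add_cancel])
    simp [signedShift, hk, this]

lemma iterate_signedShift_single_zero_of_lt (a : ℤ) :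
    ∀ j (hj : j < n), (signedShift n)^[j] (Pi.single 0 a) = Pi.single ⟨j, hj⟩ a
  | 0, _ => rfl
  | j + 1, hj => by
    have hsucc : (⟨j, by omega⟩ + 1 : Fin n) = ⟨j + 1, hj⟩ := by
      ext; simp [Fin.val_add, Nat.mod_eq_of_lt hj]
    rw [iterate_succ_apply', iterate_signedShift_single_zero_of_lt a j (by omega),
      signedShift_single, hsucc, if_neg (by simp [Fin.ext_iff])]

lemma iterate_signedShift_single_zero (j : Fin n) (a : ℤ) :
    (signedShift n)^[j] (Pi.single 0 a) = Pi.single j a :=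
  iterate_signedShift_single_zero_of_lt a j j.isLt

lemma iterate_signedShift_n_single_zero (a : ℤ) :
    (signedShift n)^[n] (Pi.single 0 a) = Pi.single 0 (-a) := by
  have hn : n - 1 + 1 = n := Nat.sub_add_cancel (NeZero.one_le)
  have hlast : (⟨n - 1, by omega⟩ + 1 : Fin n) = 0 := by
    ext; simp [Fin.val_add, hn]
  rw [show (signedShift n)^[n] = (signedShift n)^[n - 1 + 1] by rw [hn], iterate_succ_apply',
    iterate_signedShift_single_zero_of_lt a _ (by omega), signedShift_single, hlast, if_pos rfl]

lemma iterate_signedShift_mul_single_zero (q : ℕ) (a : ℤ) :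
    (signedShift n)^[n * q] (Pi.single 0 a) = Pi.single 0 ((-1) ^ q * a) := by
  induction q generalizing a with
  | zero => simp
  | succ q ih =>
    rw [Nat.mul_succ, iterate_add_apply, iterate_signedShift_n_single_zero, ih, pow_succ]
    ring_nf

lemma iterate_signedShift_single_zero_add_mul (j : Fin n) (q : ℕ) (a : ℤ) :
    (signedShift n)^[j + n * q] (Pi.single 0 a) = Pi.single j ((-1) ^ q * a) := by
  rw [iterate_add_apply, iterate_signedShift_mul_single_zero, iterate_signedShift_single_zero]

lemma iterate_signedShift_injOn :
    Set.InjOn (fun m => (signedShift n)^[m]) (Set.Iio (2 * n)) := by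
  intro a ha b hb hab
  have orbit (m : ℕ) : (signedShift n)^[m] (Pi.single 0 1) =
      Pi.single ⟨m % n, Nat.mod_lt m (NeZero.pos n)⟩ ((-1) ^ (m / n)) := by
    rw [← mul_one ((-1 : ℤ) ^ (m / n)), ← iterate_signedShift_single_zero_add_mul,
      Nat.mod_add_div]
  have h := congrFun hab (Pi.single 0 1)
  simp only [orbit] at h
  obtain ⟨hmod, hdiv⟩ := (Pi.single_eq_single_iff_of_ne_zero (by simp)).mp h
  have ha2 : a / n < 2 := Nat.div_lt_of_lt_mul (by rw [mul_comm]; exact ha)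
  have hb2 : b / n < 2 := Nat.div_lt_of_lt_mul (by rw [mul_comm]; exact hb)
  have hdiv' : a / n = b / n := by
    interval_cases (a / n) <;> interval_cases (b / n) <;> first | rfl | norm_num at hdiv
  rw [← Nat.mod_add_div a n, ← Nat.mod_add_div b n, Fin.mk.inj hmod, hdiv']

lemma IsSignedPerm.eq_of_commute {c d : ℤ} {f g : (Fin n → ℤ) → Fin n → ℤ}
    (hf : IsSignedPerm n c f) (hg : IsSignedPerm n d g)
    (hfM : Function.Commute f (signedShift n)) (hgM : Function.Commute g (signedShift n))
    (h₀ : f (Pi.single 0 1) = g (Pi.single 0 1)) : f = g :=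
  hf.eq_of_apply_single hg fun j => by
    rw [← iterate_signedShift_single_zero j, (hfM.iterate_right j).eq,
      (hgM.iterate_right j).eq, h₀]

lemma IsSignedPerm.exists_eq_iterate_signedShift {c : ℤ} {f : (Fin n → ℤ) → Fin n → ℤ}
    (hf : IsSignedPerm n c f) (hfM : Function.Commute f (signedShift n)) :
    ∃ m < 2 * n, f = (signedShift n)^[m] := by
  obtain ⟨ε, σ, hε, -, rfl⟩ := id hf
  obtain ⟨q, hq, hεq⟩ : ∃ q < 2, ε 0 = (-1) ^ q := by
    rcases hε 0 with h | h
    exacts [⟨0, by norm_num, h⟩, ⟨1, by norm_num, h⟩]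
  refine ⟨σ 0 + n * q, by have := (σ 0).isLt; interval_cases q <;> omega,
    hf.eq_of_commute (isSignedPerm_iterate_signedShift _) hfM
      (Function.Commute.iterate_self _ _) ?_⟩
  rw [iterate_signedShift_single_zero_add_mul, sgnPermAct_single, hεq]

lemma isSignedPerm_one_and_comp_eq_iff {f : (Fin n → ℤ) → Fin n → ℤ} :
    IsSignedPerm n 1 f ∧ f ∘ signedShift n = signedShift n ∘ f ↔
      ∃ k : Fin n, (signedShift n)^[2 * k] = f := by
  constructor
  · rintro ⟨hf, hfM⟩
    obtain ⟨m, hm, rfl⟩ := hf.exists_eq_iterate_signedShift (semiconj_iff_comp_eq.mpr hfM)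
    obtain ⟨k, rfl⟩ : Even m := (neg_one_pow_eq_one_iff_even (by norm_num)).mp
      ((isSignedPerm_iterate_signedShift m).sign_eq hf)
    exact ⟨⟨k, by omega⟩, by simp [two_mul]⟩
  · rintro ⟨k, rfl⟩
    have hk := isSignedPerm_iterate_signedShift (n := n) (2 * k)
    rw [pow_mul, neg_one_sq, one_pow] at hk
    exact ⟨hk, (Function.Commute.iterate_self _ _).comp_eq⟩

lemma injective_iterate_two_mul_signedShift :
    Injective fun k : Fin n => (signedShift n)^[2 * k] := fun k l hkl =>
  Fin.ext (by simpa using iterate_signedShift_injOn (by simp) (by simp) hkl)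

end SignedShift

theorem stmt_15_general (n : ℕ) [NeZero n] :
    Set.ncard {f : (Fin n → ℤ) → (Fin n → ℤ) |
      (∃ (ε : Fin n → ℤ) (σ : Equiv.Perm (Fin n)),
        (∀ i, ε i = 1 ∨ ε i = -1) ∧ (∏ i, ε i) = 1 ∧ f = sgnPermAct n ε σ) ∧
      f ∘ signedShift n = signedShift n ∘ f} = n := by
  convert Set.ncard_range_of_injective (injective_iterate_two_mul_signedShift (n := n)) using 2
  · ext f
    exact isSignedPerm_one_and_comp_eq_iff (f := f)
  · simp

/-- Let `n ≥ 4`, let `W` be the Weyl group of type `Dₙ`, realized as the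
signed permutations `(ε, σ)` of `ℤ^n` with `ε₁⋯εₙ = 1`, and let
`M(x₁, …, xₙ) = (−xₙ, x₁, …, x_{n−1})`.  Then the set
`{s ∈ W : s∘M = M∘s}` has exactly `n` elements. -/
theorem stmt_15 (n : ℕ) [NeZero n] (hn : 4 ≤ n) :
    Set.ncard {f : (Fin n → ℤ) → (Fin n → ℤ) |
      (∃ (ε : Fin n → ℤ) (σ : Equiv.Perm (Fin n)),
        (∀ i, ε i = 1 ∨ ε i = -1) ∧ (∏ i, ε i) = 1 ∧ f = sgnPermAct n ε σ) ∧
      f ∘ signedShift n = signedShift n ∘ f} = n :=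
  stmt_15_general n
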